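/- arXiv:2208.12391 — 5 statements merged into one kernel-verified Lean document; each statement's English description precedes it below -/
import Mathlib

section
/- For every ξ ∈ C, the W-orbit of (ξ, ξ) in C × C equals the set {(ξ,ξ), (ξ⁻¹,ξ⁻¹), (ξ²,ξ⁻¹), (ξ⁻¹,ξ²), (ξ,ξ⁻²), (ξ⁻²,ξ)}. Its cardinality is 1 if ξ = 1, is 3 if ξ has order 2, is 2 if ξ has order 3, and is 6 if ξ has order at least 4 or infinite order. -/
/-- The permutation `a` of `C × C`, `a(ξ₁, ξ₂) = (ξ₂, ξ₁)` (the reflection `s_α`). -/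
def aG2 (C : Type*) [CommGroup C] : Equiv.Perm (C × C) where
  toFun p := (p.2, p.1)
  invFun p := (p.2, p.1)
  left_inv p := rfl
  right_inv p := rfl

/-- The permutation `b` of `C × C`, `b(ξ₁, ξ₂) = (ξ₁ξ₂, ξ₂⁻¹)` (the reflection `s_β`). -/
def bG2 (C : Type*) [CommGroup C] : Equiv.Perm (C × C) where
  toFun p := (p.1 * p.2, p.2⁻¹)
  invFun p := (p.1 * p.2, p.2⁻¹)
  left_inv p := by simp
  right_inv p := by simp

/-- The subgroup of `Perm (C × C)` generated by `a` and `b` (the Weyl group of `G₂`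
acting on characters of the torus). -/
def WG2 (C : Type*) [CommGroup C] : Subgroup (Equiv.Perm (C × C)) :=
  Subgroup.closure {aG2 C, bG2 C}

/-!
Write `zpowPair ξ (i, j) = (ξ ^ i, ξ ^ j)`. On such pairs `a` and `b` act through the exponents, by
`(i, j) ↦ (j, i)` and `(i, j) ↦ (i + j, -j)`, and these two involutions of `ℤ × ℤ` preserve the six
exponent pairs `g2Exponents`. Hence `W` preserves their image, and the words `b, ab, bab, abab,
babab` reach all six from `(1, 1)`, so the orbit of `(ξ, ξ)` is that image. Two exponent pairs give
the same point iff they agree modulo `n = orderOf ξ`, so the orbit has as many points as the image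
of `g2Exponents` in `(ZMod n)²`: for `n ≤ 3` this is a finite computation, and for `n = 0` or
`n ≥ 4` distinct exponent pairs differ in some coordinate by a nonzero integer of absolute value at
most `3`, which `n` cannot divide.
-/

open Finset Function Set Pointwise

theorem Finset.ncard_image_eq_ncard_image_of_eq_iff {α β γ : Type*} {f : α → β} {g : α → γ}
    (hfg : ∀ x y, f x = f y ↔ g x = g y) (s : Finset α) :
    (f '' s).ncard = (g '' s).ncard := by
  classical
  rw [← coe_image, ← coe_image, ncard_coe_finset, ncard_coe_finset]
  induction s using Finset.induction_on with
  | empty => simp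
  | insert a s _ ih =>
    have hmem : f a ∈ s.image f ↔ g a ∈ s.image g := by
      simp only [Finset.mem_image, hfg]
    simp only [image_insert, card_insert_eq_ite, hmem, ih]

theorem Equiv.Perm.mapsTo_of_mem_closure {α : Type*} {s : Set (Equiv.Perm α)} {S : Set α}
    (hinv : ∀ σ ∈ s, Involutive σ) (hmaps : ∀ σ ∈ s, MapsTo σ S S) {w : Equiv.Perm α}
    (hw : w ∈ Subgroup.closure s) : MapsTo w S S := by
  have hle : Subgroup.closure s ≤ MulAction.stabilizer (Equiv.Perm α) S := by
    refine (Subgroup.closure_le _).2 fun σ hσ => ?_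
    refine MulAction.mem_stabilizer_iff.2 (Set.Subset.antisymm ?_ fun x hx => ?_)
    · rintro _ ⟨x, hx, rfl⟩
      exact hmaps σ hσ hx
    · exact Set.mem_smul_set.2 ⟨σ x, hmaps σ hσ hx, hinv σ hσ x⟩
  intro x hx
  have hS : w • S = S := MulAction.mem_stabilizer_iff.1 (hle hw)
  exact hS ▸ Set.smul_mem_smul_set hx

def g2Exponents : Finset (ℤ × ℤ) := {(1, 1), (-1, -1), (2, -1), (-1, 2), (1, -2), (-2, 1)}

def intCastPair (n : ℕ) : ℤ × ℤ → ZMod n × ZMod n := Prod.map (↑) (↑)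

theorem injOn_intCastPair_g2Exponents {n : ℕ} (hn : n = 0 ∨ 4 ≤ n) :
    InjOn (intCastPair n) g2Exponents := by
  have hsep : ∀ p ∈ g2Exponents, ∀ q ∈ g2Exponents, p ≠ q →
      (p.1 ≠ q.1 ∧ (q.1 - p.1).natAbs ≤ 3) ∨ (p.2 ≠ q.2 ∧ (q.2 - p.2).natAbs ≤ 3) := by
    decide
  have hcast : ∀ a b : ℤ, (a : ZMod n) = b → (b - a).natAbs ≤ 3 → a = b := by
    intro a b hab hle
    rw [ZMod.intCast_eq_intCast_iff_dvd_sub, Int.natCast_dvd] at hab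
    have : (b - a).natAbs = 0 := by
      rcases hn with rfl | hn
      · exact Nat.eq_zero_of_zero_dvd hab
      · exact Nat.eq_zero_of_dvd_of_lt hab (by omega)
    omega
  intro p hp q hq hpq
  simp only [intCastPair, Prod.map, Prod.mk.injEq] at hpq
  by_contra hne
  rcases hsep p hp q hq hne with ⟨hne1, hle⟩ | ⟨hne2, hle⟩
  exacts [hne1 (hcast _ _ hpq.1 hle), hne2 (hcast _ _ hpq.2 hle)]

section

variable {C : Type*} [CommGroup C]

def zpowPair (ξ : C) (p : ℤ × ℤ) : C × C := (ξ ^ p.1, ξ ^ p.2)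

theorem aG2_zpowPair (ξ : C) (p : ℤ × ℤ) : aG2 C (zpowPair ξ p) = zpowPair ξ p.swap := rfl

theorem bG2_zpowPair (ξ : C) (p : ℤ × ℤ) :
    bG2 C (zpowPair ξ p) = zpowPair ξ (p.1 + p.2, -p.2) := by
  simp [bG2, zpowPair, zpow_add, zpow_neg]

theorem involutive_aG2 : Involutive (aG2 C) := fun _ => rfl

theorem involutive_bG2 : Involutive (bG2 C) := fun p => by simp [bG2]

theorem mapsTo_aG2 (ξ : C) :
    MapsTo (aG2 C) (zpowPair ξ '' g2Exponents) (zpowPair ξ '' g2Exponents) := by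
  rintro _ ⟨p, hp, rfl⟩
  have hswap : ∀ p ∈ g2Exponents, p.swap ∈ g2Exponents := by decide
  exact ⟨p.swap, hswap p hp, (aG2_zpowPair ξ p).symm⟩

theorem mapsTo_bG2 (ξ : C) :
    MapsTo (bG2 C) (zpowPair ξ '' g2Exponents) (zpowPair ξ '' g2Exponents) := by
  rintro _ ⟨p, hp, rfl⟩
  have hb : ∀ p ∈ g2Exponents, (p.1 + p.2, -p.2) ∈ g2Exponents := by decide
  exact ⟨_, hb p hp, (bG2_zpowPair ξ p).symm⟩

theorem ncard_image_zpowPair (ξ : C) (s : Finset (ℤ × ℤ)) :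
    (zpowPair ξ '' s).ncard = (intCastPair (orderOf ξ) '' s).ncard :=
  Finset.ncard_image_eq_ncard_image_of_eq_iff (fun p q => by
    simp only [zpowPair, intCastPair, Prod.map, Prod.mk.injEq, zpow_eq_zpow_iff_modEq,
      ZMod.intCast_eq_intCast_iff]) s

theorem aG2_mem_WG2 : aG2 C ∈ WG2 C := Subgroup.subset_closure (by simp)

theorem bG2_mem_WG2 : bG2 C ∈ WG2 C := Subgroup.subset_closure (by simp)

theorem image_zpowPair_g2Exponents (ξ : C) :
    zpowPair ξ '' g2Exponents = ({(ξ, ξ), (ξ⁻¹, ξ⁻¹), (ξ ^ 2, ξ⁻¹), (ξ⁻¹, ξ ^ 2), (ξ, (ξ ^ 2)⁻¹),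
      ((ξ ^ 2)⁻¹, ξ)} : Set (C × C)) := by
  simp [g2Exponents, zpowPair, Set.image_insert_eq, zpow_neg]

theorem setOf_exists_WG2_apply_eq (ξ : C) :
    {p : C × C | ∃ w ∈ WG2 C, w (ξ, ξ) = p} = zpowPair ξ '' g2Exponents := by
  have hbase : (ξ, ξ) = zpowPair ξ (1, 1) := by simp [zpowPair]
  refine Set.Subset.antisymm ?_ ?_
  · rintro _ ⟨w, hw, rfl⟩
    refine Equiv.Perm.mapsTo_of_mem_closure ?_ ?_ hw ⟨(1, 1), by decide, hbase.symm⟩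
    · rintro σ (rfl | rfl)
      exacts [involutive_aG2, involutive_bG2]
    · rintro σ (rfl | rfl)
      exacts [mapsTo_aG2 ξ, mapsTo_bG2 ξ]
  · set O := {p : C × C | ∃ w ∈ WG2 C, w (ξ, ξ) = p}
    have hO : ∀ w ∈ WG2 C, ∀ p ∈ O, w p ∈ O := by
      rintro w hw _ ⟨v, hv, rfl⟩
      exact ⟨w * v, mul_mem hw hv, rfl⟩
    have ha : ∀ p, zpowPair ξ p ∈ O → zpowPair ξ p.swap ∈ O := fun p hp =>
      aG2_zpowPair ξ p ▸ hO _ aG2_mem_WG2 _ hp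
    have hb : ∀ p, zpowPair ξ p ∈ O → zpowPair ξ (p.1 + p.2, -p.2) ∈ O := fun p hp =>
      bG2_zpowPair ξ p ▸ hO _ bG2_mem_WG2 _ hp
    have h1 : zpowPair ξ (1, 1) ∈ O := ⟨1, one_mem _, hbase⟩
    have h2 := hb _ h1
    have h3 := ha _ h2
    have h4 := hb _ h3
    have h5 := ha _ h4
    have h6 := hb _ h5
    norm_num at h2 h3 h4 h5 h6
    rintro _ ⟨p, hp, rfl⟩
    simp only [g2Exponents, coe_insert, coe_singleton, Set.mem_insert_iff,
      Set.mem_singleton_iff] at hp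
    rcases hp with rfl | rfl | rfl | rfl | rfl | rfl <;> assumption

end

theorem stmt_1 {C : Type*} [CommGroup C] (ξ : C) (orb : Set (C × C))
    (horb : orb = {p : C × C | ∃ w ∈ WG2 C, w (ξ, ξ) = p}) :
    orb = ({(ξ, ξ), (ξ⁻¹, ξ⁻¹), (ξ ^ 2, ξ⁻¹), (ξ⁻¹, ξ ^ 2), (ξ, (ξ ^ 2)⁻¹),
            ((ξ ^ 2)⁻¹, ξ)} : Set (C × C)) ∧
    (ξ = 1 → orb.ncard = 1) ∧
    (orderOf ξ = 2 → orb.ncard = 3) ∧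
    (orderOf ξ = 3 → orb.ncard = 2) ∧
    (orderOf ξ = 0 ∨ 4 ≤ orderOf ξ → orb.ncard = 6) := by
  have horbit : orb = zpowPair ξ '' g2Exponents := horb.trans (setOf_exists_WG2_apply_eq ξ)
  have hcard : orb.ncard = #(g2Exponents.image (intCastPair (orderOf ξ))) := by
    rw [horbit, ncard_image_zpowPair, ← coe_image, ncard_coe_finset]
  refine ⟨horbit.trans (image_zpowPair_g2Exponents ξ), fun h1 => ?_, fun h2 => ?_, fun h3 => ?_,
    fun h => ?_⟩
  · rw [hcard, h1, orderOf_one]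
    decide
  · rw [hcard, h2]
    decide
  · rw [hcard, h3]
    decide
  · rw [hcard, card_image_of_injOn (injOn_intCastPair_g2Exponents h)]
    rfl
end

section
/- Let ξ ∈ C with ξ ≠ 1, ξ² ≠ 1 and ξ³ ≠ 1. Then the stabilizer of (ξ, ξ) in W equals {1, a}; in particular it is cyclic of order 2. -/
/-!
Every element of `W` acts on `C × C` through an integer matrix `M`,
`(x, y) ↦ (x ^ M₀₀ * y ^ M₀₁, x ^ M₁₀ * y ^ M₁₁)`, taken from an explicit list of twelve matrices
closed under left multiplication by the matrices of `a` and `b`. On the diagonal, `(ξ, ξ)` goes to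
`(ξ ^ r₀, ξ ^ r₁)` with `rᵢ` the row sums of `M`. Only the identity and the matrix of `a` have both
row sums `1`; every other matrix has a row sum in `{2, -1, -2}`, and `ξ ^ n = ξ` for such `n` would
make `ξ`, `ξ²` or `ξ³` trivial.
-/

section MonomialMap

variable {C : Type*} [CommGroup C]

def monomialMap (M : Matrix (Fin 2) (Fin 2) ℤ) (p : C × C) : C × C :=
  (p.1 ^ M 0 0 * p.2 ^ M 0 1, p.1 ^ M 1 0 * p.2 ^ M 1 1)

lemma monomialMap_one (p : C × C) : monomialMap 1 p = p := by
  simp [monomialMap]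

lemma monomialMap_mul (M N : Matrix (Fin 2) (Fin 2) ℤ) (p : C × C) :
    monomialMap (M * N) p = monomialMap M (monomialMap N p) := by
  simp only [monomialMap, Matrix.mul_apply, Fin.sum_univ_two, zpow_add, mul_zpow, ← zpow_mul,
    Prod.mk.injEq, mul_comm (N _ _)]
  constructor <;> ac_rfl

lemma monomialMap_diag (M : Matrix (Fin 2) (Fin 2) ℤ) (x : C) :
    monomialMap M (x, x) = (x ^ (M 0 0 + M 0 1), x ^ (M 1 0 + M 1 1)) := by
  simp [monomialMap, zpow_add]

end MonomialMap

def aG2Matrix : Matrix (Fin 2) (Fin 2) ℤ := !![0, 1; 1, 0]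

def bG2Matrix : Matrix (Fin 2) (Fin 2) ℤ := !![1, 1; 0, -1]

def weylG2Matrices : List (Matrix (Fin 2) (Fin 2) ℤ) :=
  [!![1, 0; 0, 1], !![0, 1; 1, 0], !![1, 1; 0, -1], !![-1, -1; 0, 1], !![-1, -1; 1, 0],
   !![-1, 0; 0, -1], !![-1, 0; 1, 1], !![0, -1; -1, 0], !![0, -1; 1, 1], !![0, 1; -1, -1],
   !![1, 0; -1, -1], !![1, 1; -1, 0]]

lemma one_mem_weylG2Matrices : (1 : Matrix (Fin 2) (Fin 2) ℤ) ∈ weylG2Matrices := by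
  decide

lemma aG2Matrix_mul_mem_weylG2Matrices :
    ∀ M ∈ weylG2Matrices, aG2Matrix * M ∈ weylG2Matrices := by
  decide

lemma bG2Matrix_mul_mem_weylG2Matrices :
    ∀ M ∈ weylG2Matrices, bG2Matrix * M ∈ weylG2Matrices := by
  decide

lemma eq_one_or_eq_aG2Matrix_or_rowSum_mem :
    ∀ M ∈ weylG2Matrices, M = 1 ∨ M = aG2Matrix ∨
      M 0 0 + M 0 1 ∈ ({2, -1, -2} : Finset ℤ) ∨
      M 1 0 + M 1 1 ∈ ({2, -1, -2} : Finset ℤ) := by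
  decide

section WeylGroup

variable {C : Type*} [CommGroup C]

lemma coe_aG2 : ⇑(aG2 C) = monomialMap aG2Matrix := by
  ext p <;> simp [aG2, aG2Matrix, monomialMap]

lemma coe_bG2 : ⇑(bG2 C) = monomialMap bG2Matrix := by
  ext p <;> simp [bG2, bG2Matrix, monomialMap]

lemma aG2_mul_self : aG2 C * aG2 C = 1 := by
  ext p <;> rfl

lemma bG2_mul_self : bG2 C * bG2 C = 1 := by
  ext p <;> simp [bG2]

lemma aG2_ne_one [Nontrivial C] : aG2 C ≠ 1 := by
  obtain ⟨x, hx⟩ := exists_ne (1 : C)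
  intro h
  exact hx (congrArg Prod.snd (congrFun (congrArg DFunLike.coe h) (x, 1)))

lemma exists_mem_weylG2Matrices_of_mem_WG2 {w : Equiv.Perm (C × C)} (hw : w ∈ WG2 C) :
    ∃ M ∈ weylG2Matrices, ⇑w = monomialMap M := by
  have mul_mem : ∀ g ∈ ({aG2 C, bG2 C} : Set (Equiv.Perm (C × C))),
      ∀ w : Equiv.Perm (C × C), (∃ M ∈ weylG2Matrices, ⇑w = monomialMap M) →
        ∃ M ∈ weylG2Matrices, ⇑(g * w) = monomialMap M := by
    rintro g (rfl | rfl) w ⟨M, hM, hw⟩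
    · exact ⟨aG2Matrix * M, aG2Matrix_mul_mem_weylG2Matrices M hM,
        funext fun p => by simp [hw, coe_aG2, monomialMap_mul]⟩
    · exact ⟨bG2Matrix * M, bG2Matrix_mul_mem_weylG2Matrices M hM,
        funext fun p => by simp [hw, coe_bG2, monomialMap_mul]⟩
  have inv_eq : ∀ g ∈ ({aG2 C, bG2 C} : Set (Equiv.Perm (C × C))), g⁻¹ = g := by
    rintro g (rfl | rfl)
    exacts [inv_eq_of_mul_eq_one_right aG2_mul_self, inv_eq_of_mul_eq_one_right bG2_mul_self]
  induction hw using Subgroup.closure_induction_left with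
  | one => exact ⟨1, one_mem_weylG2Matrices, funext fun p => (monomialMap_one p).symm⟩
  | mul_left g hg w _ ih => exact mul_mem g hg w ih
  | inv_mul_cancel g hg w _ ih => exact inv_eq g hg ▸ mul_mem g hg w ih

lemma zpow_ne_self {ξ : C} (h1 : ξ ≠ 1) (h2 : ξ ^ 2 ≠ 1) (h3 : ξ ^ 3 ≠ 1) {n : ℤ}
    (hn : n ∈ ({2, -1, -2} : Finset ℤ)) : ξ ^ n ≠ ξ := by
  intro h
  have hpow : ξ ^ (n - 1) = 1 := by rw [zpow_sub_one, h, mul_inv_cancel]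
  simp only [Finset.mem_insert, Finset.mem_singleton] at hn
  rcases hn with rfl | rfl | rfl
  · exact h1 (by simpa using hpow)
  · exact h2 (by simpa [zpow_neg] using hpow)
  · exact h3 (by simpa [zpow_neg] using hpow)

lemma eq_one_or_eq_aG2_of_mem_WG2 {ξ : C} (h1 : ξ ≠ 1) (h2 : ξ ^ 2 ≠ 1) (h3 : ξ ^ 3 ≠ 1)
    {w : Equiv.Perm (C × C)} (hw : w ∈ WG2 C) (hfix : w (ξ, ξ) = (ξ, ξ)) :
    w = 1 ∨ w = aG2 C := by
  obtain ⟨M, hM, hwM⟩ := exists_mem_weylG2Matrices_of_mem_WG2 hw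
  rw [hwM, monomialMap_diag, Prod.mk.injEq] at hfix
  rcases eq_one_or_eq_aG2Matrix_or_rowSum_mem M hM with rfl | rfl | hrow | hrow
  · exact Or.inl (DFunLike.coe_injective (hwM.trans (funext monomialMap_one)))
  · exact Or.inr (DFunLike.coe_injective (hwM.trans coe_aG2.symm))
  · exact absurd hfix.1 (zpow_ne_self h1 h2 h3 hrow)
  · exact absurd hfix.2 (zpow_ne_self h1 h2 h3 hrow)

end WeylGroup

theorem stmt_5 {C : Type*} [CommGroup C] (ξ : C) (h1 : ξ ≠ 1) (h2 : ξ ^ 2 ≠ 1)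
    (h3 : ξ ^ 3 ≠ 1) :
    {w : Equiv.Perm (C × C) | w ∈ WG2 C ∧ w (ξ, ξ) = (ξ, ξ)} =
      ({1, aG2 C} : Set (Equiv.Perm (C × C))) ∧
    aG2 C ≠ 1 ∧ (aG2 C) ^ 2 = 1 ∧
    Set.ncard {w : Equiv.Perm (C × C) | w ∈ WG2 C ∧ w (ξ, ξ) = (ξ, ξ)} = 2 := by
  have : Nontrivial C := nontrivial_of_ne ξ 1 h1
  have hstab : {w : Equiv.Perm (C × C) | w ∈ WG2 C ∧ w (ξ, ξ) = (ξ, ξ)} = {1, aG2 C} := by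
    ext w
    constructor
    · rintro ⟨hw, hfix⟩
      exact eq_one_or_eq_aG2_of_mem_WG2 h1 h2 h3 hw hfix
    · rintro (rfl | rfl)
      exacts [⟨one_mem _, rfl⟩, ⟨Subgroup.subset_closure (Or.inl rfl), rfl⟩]
  exact ⟨hstab, aG2_ne_one, sq (aG2 C) ▸ aG2_mul_self,
    by rw [hstab, Set.ncard_pair aG2_ne_one.symm]⟩
end

section
/- Let ξ ∈ C have order exactly 3. Then the stabilizer of (ξ, ξ) in W equals {1, a, bab, abab, baba, ababa}; it has order 6 and is nonabelian, hence isomorphic to the symmetric group S₃. -/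
/-!
Writing `(x, y)` as the triple `(x, y, (xy)⁻¹)` of elements with product `1`, the reflections
`a`, `bab`, `ababa` act as the three transpositions of `S₃`, and `b` is the transposition
`(0 2)` followed by the inversion `p ↦ p⁻¹`, which commutes with `S₃`. Hence every element of
`W` is `σ` or `p ↦ (σ p)⁻¹` for some `σ ∈ S₃`. Since `ξ³ = 1` the triple of `(ξ, ξ)` is
`(ξ, ξ, ξ)`, fixed by all of `S₃`, while inversion moves it because `ξ² ≠ 1`. So the stabilizer
is a copy of `S₃`, acting faithfully because `(ξ, 1, ξ⁻¹)` has distinct entries.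
-/

open Equiv

namespace WG2

variable {C : Type*} [CommGroup C]

def triple (p : C × C) : Fin 3 → C := ![p.1, p.2, (p.1 * p.2)⁻¹]

lemma triple_apply_perm_prod (p : C × C) (τ : Perm (Fin 3)) :
    triple p (τ 0) * triple p (τ 1) * triple p (τ 2) = 1 := by
  have h := Equiv.prod_comp τ (triple p)
  rw [Fin.prod_univ_three, Fin.prod_univ_three] at h
  rw [h]
  simp [triple, mul_assoc]

def permFun (σ : Perm (Fin 3)) (p : C × C) : C × C :=
  (triple p (σ⁻¹ 0), triple p (σ⁻¹ 1))

lemma triple_permFun (σ : Perm (Fin 3)) (p : C × C) (i : Fin 3) :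
    triple (permFun σ p) i = triple p (σ⁻¹ i) := by
  match i with
  | 0 => rfl
  | 1 => rfl
  | 2 => exact inv_eq_of_mul_eq_one_right (triple_apply_perm_prod p σ⁻¹)

lemma permFun_one (p : C × C) : permFun 1 p = p := rfl

lemma permFun_mul (σ τ : Perm (Fin 3)) (p : C × C) :
    permFun (σ * τ) p = permFun σ (permFun τ p) := by
  show (triple p ((σ * τ)⁻¹ 0), triple p ((σ * τ)⁻¹ 1)) =
    (triple (permFun τ p) (σ⁻¹ 0), triple (permFun τ p) (σ⁻¹ 1))
  rw [triple_permFun, triple_permFun, mul_inv_rev]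
  rfl

def permHom : Perm (Fin 3) →* Perm (C × C) :=
  MonoidHom.mk'
    (fun σ =>
      { toFun := permFun σ
        invFun := permFun σ⁻¹
        left_inv := fun p => by rw [← permFun_mul, inv_mul_cancel, permFun_one]
        right_inv := fun p => by rw [← permFun_mul, mul_inv_cancel, permFun_one] })
    (fun σ τ => Equiv.ext (permFun_mul σ τ))

lemma permHom_apply (σ : Perm (Fin 3)) (p : C × C) : permHom σ p = permFun σ p := rfl

lemma permHom_swap_zero_one : permHom (swap 0 1) = aG2 C := by
  ext p <;> simp [permHom_apply, permFun, triple, aG2]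

lemma permHom_swap_one_two : permHom (swap 1 2) = bG2 C * aG2 C * bG2 C := by
  ext p <;> simp [permHom_apply, permFun, triple, aG2, bG2, swap_apply_def, mul_comm]

lemma permHom_swap_zero_two :
    permHom (swap 0 2) = aG2 C * bG2 C * aG2 C * bG2 C * aG2 C := by
  ext p <;> simp [permHom_apply, permFun, triple, aG2, bG2, swap_apply_def, mul_comm]

lemma permFun_inv (σ : Perm (Fin 3)) (p : C × C) : permFun σ p⁻¹ = (permFun σ p)⁻¹ := by
  have h : triple p⁻¹ = (triple p)⁻¹ := by
    funext i
    fin_cases i <;> simp [triple, mul_comm]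
  simp [permFun, h]

lemma commute_inv_permHom (σ : Perm (Fin 3)) : Commute (Equiv.inv (C × C)) (permHom σ) :=
  Equiv.ext fun p => (permFun_inv σ p).symm

lemma equivInv_mul_self : Equiv.inv (C × C) * Equiv.inv (C × C) = 1 :=
  Equiv.ext inv_inv

lemma bG2_eq_inv_mul_permHom : bG2 C = Equiv.inv (C × C) * permHom (swap 0 2) := by
  ext p <;> simp [permHom_apply, permFun, triple, bG2, swap_apply_def]

lemma aG2_mem : aG2 C ∈ WG2 C := Subgroup.subset_closure (Set.mem_insert _ _)

lemma bG2_mem : bG2 C ∈ WG2 C := Subgroup.subset_closure (Set.mem_insert_of_mem _ rfl)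

lemma permHom_mem (σ : Perm (Fin 3)) : permHom σ ∈ WG2 C := by
  have hσ : σ ∈ Submonoid.closure (Set.range fun i : Fin 2 ↦ swap i.castSucc i.succ) := by
    rw [Perm.mclosure_swap_castSucc_succ]
    trivial
  refine (Submonoid.closure_le (S := ((WG2 C).comap permHom).toSubmonoid)).mpr ?_ hσ
  rintro _ ⟨i, rfl⟩
  fin_cases i
  · show permHom (swap 0 1) ∈ WG2 C
    rw [permHom_swap_zero_one]
    exact aG2_mem
  · show permHom (swap 1 2) ∈ WG2 C
    rw [permHom_swap_one_two]
    exact mul_mem (mul_mem bG2_mem aG2_mem) bG2_mem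

lemma exists_eq_permHom_or_eq_inv_mul_permHom {g : Perm (C × C)} (hg : g ∈ WG2 C) :
    ∃ σ, g = permHom σ ∨ g = Equiv.inv (C × C) * permHom σ := by
  induction hg using Subgroup.closure_induction with
  | mem g hg =>
    rcases hg with rfl | rfl
    · exact ⟨swap 0 1, .inl permHom_swap_zero_one.symm⟩
    · exact ⟨swap 0 2, .inr bG2_eq_inv_mul_permHom⟩
  | one => exact ⟨1, .inl (map_one _).symm⟩
  | mul g h _ _ hg hh =>
    obtain ⟨σ, rfl | rfl⟩ := hg <;> obtain ⟨τ, rfl | rfl⟩ := hh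
    · exact ⟨σ * τ, .inl (map_mul _ _ _).symm⟩
    · refine ⟨σ * τ, .inr ?_⟩
      rw [map_mul, ← mul_assoc, ← (commute_inv_permHom σ).eq, mul_assoc]
    · exact ⟨σ * τ, .inr (by rw [map_mul, mul_assoc])⟩
    · refine ⟨σ * τ, .inl ?_⟩
      rw [map_mul, mul_assoc, ← mul_assoc (permHom σ), ← (commute_inv_permHom σ).eq,
        ← mul_assoc, ← mul_assoc, equivInv_mul_self, one_mul]
  | inv g _ hg =>
    obtain ⟨σ, rfl | rfl⟩ := hg
    · exact ⟨σ⁻¹, .inl (map_inv _ _).symm⟩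
    · refine ⟨σ⁻¹, .inr ?_⟩
      rw [mul_inv_rev, map_inv, inv_eq_of_mul_eq_one_right equivInv_mul_self]
      exact (commute_inv_permHom σ).inv_right.eq.symm

lemma permHom_apply_diag {x : C} (hx : x ^ 3 = 1) (σ : Perm (Fin 3)) :
    permHom σ (x, x) = (x, x) := by
  have hconst : triple (x, x) = fun _ => x := by
    have hxx : (x * x)⁻¹ = x := inv_eq_of_mul_eq_one_left (by rw [← pow_three, hx])
    funext i
    fin_cases i <;> simp [triple, hxx]
  simp [permHom_apply, permFun, hconst]

lemma inf_stabilizer_diag_eq_range {x : C} (hx3 : x ^ 3 = 1) (hx2 : x ^ 2 ≠ 1) :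
    WG2 C ⊓ MulAction.stabilizer (Perm (C × C)) (x, x) = (permHom (C := C)).range := by
  apply le_antisymm
  · rintro g ⟨hgW, hgx⟩
    obtain ⟨σ, rfl | rfl⟩ := exists_eq_permHom_or_eq_inv_mul_permHom hgW
    · exact ⟨σ, rfl⟩
    · replace hgx := MulAction.mem_stabilizer_iff.mp hgx
      rw [Perm.smul_def, Perm.mul_apply,
        permHom_apply_diag hx3, Equiv.inv_apply, Prod.inv_mk, Prod.mk.injEq] at hgx
      exact (hx2 (by rw [pow_two]; exact inv_eq_iff_mul_eq_one.mp hgx.1)).elim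
  · rintro _ ⟨σ, rfl⟩
    exact ⟨permHom_mem σ, permHom_apply_diag hx3 σ⟩

lemma permHom_injective {x : C} (hx1 : x ≠ 1) (hx2 : x ^ 2 ≠ 1) :
    Function.Injective (permHom (C := C)) := by
  have hinv : x⁻¹ ≠ x := fun h => hx2 (by rw [pow_two]; exact inv_eq_iff_mul_eq_one.mp h)
  have htriple : Function.Injective (triple (x, 1)) := by
    intro i j hij
    fin_cases i <;> fin_cases j <;> simp_all [triple, eq_comm]
  rw [injective_iff_map_eq_one]
  intro σ hσ
  refine inv_eq_one.mp (Equiv.ext fun i => htriple ?_)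
  rw [← triple_permFun, ← permHom_apply, hσ, Perm.one_apply, Perm.one_apply]

lemma coe_range_permHom :
    ((permHom (C := C)).range : Set (Perm (C × C))) =
      {1, aG2 C, bG2 C * aG2 C * bG2 C, aG2 C * bG2 C * aG2 C * bG2 C,
        bG2 C * aG2 C * bG2 C * aG2 C, aG2 C * bG2 C * aG2 C * bG2 C * aG2 C} := by
  have huniv : (Set.univ : Set (Perm (Fin 3))) =
      {1, swap 0 1, swap 1 2, swap 0 1 * swap 1 2, swap 1 2 * swap 0 1, swap 0 2} := by
    refine (Set.eq_univ_of_forall fun σ => ?_).symm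
    simpa using (by decide : ∀ σ : Perm (Fin 3), σ = 1 ∨ σ = swap 0 1 ∨ σ = swap 1 2 ∨
      σ = swap 0 1 * swap 1 2 ∨ σ = swap 1 2 * swap 0 1 ∨ σ = swap 0 2) σ
  rw [MonoidHom.coe_range, ← Set.image_univ, huniv]
  simp only [Set.image_insert_eq, Set.image_singleton, map_one, map_mul, permHom_swap_zero_one,
    permHom_swap_one_two, permHom_swap_zero_two, mul_assoc]

end WG2

open WG2 in
theorem stmt_7 {C : Type*} [CommGroup C] (ξ : C) (hξ : orderOf ξ = 3)
    (St : Subgroup (Equiv.Perm (C × C)))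
    (hSt : St = WG2 C ⊓ MulAction.stabilizer (Equiv.Perm (C × C)) ((ξ, ξ) : C × C)) :
    (St : Set (Equiv.Perm (C × C))) =
      {1, aG2 C, bG2 C * aG2 C * bG2 C, aG2 C * bG2 C * aG2 C * bG2 C,
        bG2 C * aG2 C * bG2 C * aG2 C, aG2 C * bG2 C * aG2 C * bG2 C * aG2 C} ∧
    Nat.card St = 6 ∧
    ¬(∀ x y : St, x * y = y * x) ∧
    Nonempty (St ≃* Equiv.Perm (Fin 3)) := by
  have h3 : ξ ^ 3 = 1 := hξ ▸ pow_orderOf_eq_one ξ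
  have h2 : ξ ^ 2 ≠ 1 := pow_ne_one_of_lt_orderOf (by norm_num) (by omega)
  have h1 : ξ ≠ 1 := by simpa using pow_ne_one_of_lt_orderOf (x := ξ) one_ne_zero (by omega)
  rw [inf_stabilizer_diag_eq_range h3 h2] at hSt
  subst hSt
  let e : Perm (Fin 3) ≃* permHom.range := MonoidHom.ofInjective (permHom_injective h1 h2)
  refine ⟨coe_range_permHom, ?_, fun hcomm => ?_, ⟨e.symm⟩⟩
  · rw [← Nat.card_congr e.toEquiv, Nat.card_perm, Nat.card_eq_fintype_card, Fintype.card_fin]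
    rfl
  · have : ∀ σ τ : Perm (Fin 3), σ * τ = τ * σ := fun σ τ =>
      e.injective (by rw [map_mul, map_mul, hcomm])
    exact absurd this (by decide)
end

section
/- Let x, y ∈ ℂ^× and let θ : ℤ² → ℂ^× be the homomorphism θ(m,n) = x^m y^n. Let q ∈ ℂ^× be an element of infinite order, and set S = {γ ∈ R : θ(γ) = q}. Then: (i) S never contains both γ and −γ; (ii) the cardinality of S belongs to {0, 1, 2, 4} (in particular it is never 3); and (iii) if S has exactly 4 elements, then there exist γ₀ ∈ ℤ² and a short root δ such that S = {γ₀, γ₀ + δ, γ₀ + 2δ, γ₀ + 3δ}. -/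
/-! If `θ a = θ b = q`, then `b - a` lies in the kernel of `θ`, while no nonzero multiple of a
point of `S` does, because `q` has infinite order. So `S` contains no pair `±γ` (that would give
`q ^ 2 = 1`), and any three points `a, b, c` of `S` are collinear, since `cross (b - a) (c - a) • a`
is an integer combination of `b - a` and `c - a`. Three distinct collinear roots of G₂ lie on one
of six strings `γ₀, γ₀ + δ, γ₀ + 2δ, γ₀ + 3δ` with `δ` short, and two of them differ by `δ`.
Hence `θ δ = 1`, `θ` is constant on the string, and `S` is the whole string. -/

/-- The twelve roots of G₂ in coordinates with respect to the basis (α∨, β∨). -/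
def G2Roots : Set (ℤ × ℤ) :=
  {(1, 0), (-1, 0), (0, 1), (0, -1), (1, 1), (-1, -1), (1, 2), (-1, -2),
    (1, 3), (-1, -3), (2, 3), (-2, -3)}

/-- The six long roots of G₂. -/
def G2Long : Set (ℤ × ℤ) := {(1, 0), (-1, 0), (1, 3), (-1, -3), (2, 3), (-2, -3)}

/-- The six short roots of G₂. -/
def G2Short : Set (ℤ × ℤ) := {(0, 1), (0, -1), (1, 1), (-1, -1), (1, 2), (-1, -2)}

def rootString {A : Type*} [AddMonoid A] (γ₀ δ : A) : Set A :=
  {γ₀, γ₀ + δ, γ₀ + 2 • δ, γ₀ + 3 • δ}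

section RootString

variable {A : Type*}

lemma rootString_eq_image [AddMonoid A] (γ₀ δ : A) :
    rootString γ₀ δ = (fun n : ℕ ↦ γ₀ + n • δ) '' ↑(Finset.range 4) := by
  ext γ
  simp only [rootString, Set.mem_insert_iff, Set.mem_singleton_iff, Finset.coe_range,
    Set.mem_image, Set.mem_Iio]
  constructor
  · rintro (rfl | rfl | rfl | rfl)
    exacts [⟨0, by simp⟩, ⟨1, by simp⟩, ⟨2, by simp⟩, ⟨3, by simp⟩]
  · rintro ⟨n, hn, rfl⟩
    interval_cases n <;> simp

lemma ncard_rootString [AddCommGroup A] [IsAddTorsionFree A] (γ₀ : A) {δ : A} (hδ : δ ≠ 0) :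
    (rootString γ₀ δ).ncard = 4 := by
  have hinj : Function.Injective fun n : ℕ ↦ γ₀ + n • δ :=
    (add_right_injective γ₀).comp
      (injective_nsmul_iff_not_isOfFinAddOrder.mpr (not_isOfFinAddOrder_of_isAddTorsionFree hδ))
  rw [rootString_eq_image, Set.ncard_image_of_injective _ hinj, Set.ncard_coe_finset,
    Finset.card_range]

end RootString

namespace AddChar

variable {A G : Type*} [CommGroup G] {q : G}

lemma map_neg_ne [AddGroup A] (ψ : AddChar A G) (hq : ¬IsOfFinOrder q) {γ : A} (h : ψ γ = q) :
    ψ (-γ) ≠ q := by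
  rw [map_neg_eq_inv, h]
  intro hinv
  exact hq (isOfFinOrder_iff_pow_eq_one.mpr ⟨2, two_pos, by rw [sq, mul_eq_one_iff_eq_inv, hinv]⟩)

lemma map_sub_eq_one [AddCommGroup A] (ψ : AddChar A G) {u v : A} (h : ψ u = ψ v) :
    ψ (v - u) = 1 := by
  rw [map_sub_eq_div, h, div_self']

lemma map_eq_of_mem_rootString [AddMonoid A] (ψ : AddChar A G) {γ₀ δ γ : A} (hδ : ψ δ = 1)
    (hγ : γ ∈ rootString γ₀ δ) : ψ γ = ψ γ₀ := by
  rw [rootString_eq_image] at hγ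
  obtain ⟨n, -, rfl⟩ := hγ
  rw [map_add_eq_mul, map_nsmul_eq_pow, hδ, one_pow, mul_one]

end AddChar

def pairChar {G : Type*} [CommGroup G] (x y : G) : AddChar (ℤ × ℤ) G where
  toFun γ := x ^ γ.1 * y ^ γ.2
  map_zero_eq_one' := by simp
  map_add_eq_mul' a b := by
    simp only [Prod.fst_add, Prod.snd_add, zpow_add]
    exact mul_mul_mul_comm _ _ _ _

def cross (u v : ℤ × ℤ) : ℤ := u.1 * v.2 - u.2 * v.1

lemma cross_sub_eq_zero {G : Type*} [CommGroup G] (ψ : AddChar (ℤ × ℤ) G) {q : G}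
    (hq : ¬IsOfFinOrder q) {a b c : ℤ × ℤ} (ha : ψ a = q) (hb : ψ b = q) (hc : ψ c = q) :
    cross (b - a) (c - a) = 0 := by
  set u := b - a
  set v := c - a
  have hu : ψ u = 1 := ψ.map_sub_eq_one (ha.trans hb.symm)
  have hv : ψ v = 1 := ψ.map_sub_eq_one (ha.trans hc.symm)
  -- Cramer's rule
  have hcramer : cross u v • a = cross a v • u + cross u a • v := by
    ext <;> simp only [cross, Prod.smul_fst, Prod.smul_snd, Prod.fst_add, Prod.snd_add,
      smul_eq_mul] <;> ring
  have hpow : q ^ cross u v = 1 := by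
    rw [← ha, ← AddChar.map_zsmul_eq_zpow, hcramer, AddChar.map_add_eq_mul,
      AddChar.map_zsmul_eq_zpow, AddChar.map_zsmul_eq_zpow, hu, hv, one_zpow, one_zpow, one_mul]
  by_contra hne
  exact hq (isOfFinOrder_iff_zpow_eq_one.mpr ⟨_, hne, hpow⟩)

def g2RootList : List (ℤ × ℤ) :=
  [(1, 0), (-1, 0), (0, 1), (0, -1), (1, 1), (-1, -1), (1, 2), (-1, -2),
    (1, 3), (-1, -3), (2, 3), (-2, -3)]

def g2ShortList : List (ℤ × ℤ) := [(0, 1), (0, -1), (1, 1), (-1, -1), (1, 2), (-1, -2)]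

lemma mem_G2Roots_iff {γ : ℤ × ℤ} : γ ∈ G2Roots ↔ γ ∈ g2RootList := by
  simp [G2Roots, g2RootList]

lemma mem_G2Short_iff {δ : ℤ × ℤ} : δ ∈ G2Short ↔ δ ∈ g2ShortList := by
  simp [G2Short, g2ShortList]

lemma finite_G2Roots : G2Roots.Finite := by
  unfold G2Roots
  exact Set.toFinite _

lemma ne_zero_of_mem_G2Short {δ : ℤ × ℤ} (hδ : δ ∈ G2Short) : δ ≠ 0 := by
  rintro rfl
  simp [G2Short, Prod.ext_iff] at hδ

lemma mem_rootString_iff {γ₀ δ γ : ℤ × ℤ} :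
    γ ∈ rootString γ₀ δ ↔ γ ∈ [γ₀, γ₀ + δ, γ₀ + 2 • δ, γ₀ + 3 • δ] := by
  simp [rootString]

set_option synthInstance.maxSize 1024 in
lemma exists_rootString_of_collinear {a b c : ℤ × ℤ} (ha : a ∈ G2Roots) (hb : b ∈ G2Roots)
    (hc : c ∈ G2Roots) (hab : a ≠ b) (hac : a ≠ c) (hbc : b ≠ c)
    (habc : cross (b - a) (c - a) = 0) :
    ∃ γ₀ δ, δ ∈ G2Short ∧ (∃ u ∈ ({a, b, c} : Set (ℤ × ℤ)), ∃ v ∈ ({a, b, c} : Set (ℤ × ℤ)),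
      v - u = δ) ∧ a ∈ rootString γ₀ δ ∧ rootString γ₀ δ ⊆ G2Roots ∧
      ∀ γ ∈ G2Roots, cross (b - a) (γ - a) = 0 → γ ∈ rootString γ₀ δ := by
  have hlist : ∀ a ∈ g2RootList, ∀ b ∈ g2RootList, ∀ c ∈ g2RootList, a ≠ b → a ≠ c → b ≠ c →
      cross (b - a) (c - a) = 0 →
      ∃ γ₀ ∈ g2RootList, ∃ δ ∈ g2ShortList, (∃ u ∈ [a, b, c], ∃ v ∈ [a, b, c], v - u = δ) ∧
        a ∈ [γ₀, γ₀ + δ, γ₀ + 2 • δ, γ₀ + 3 • δ] ∧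
        (∀ p ∈ [γ₀, γ₀ + δ, γ₀ + 2 • δ, γ₀ + 3 • δ], p ∈ g2RootList) ∧
        ∀ γ ∈ g2RootList, cross (b - a) (γ - a) = 0 →
          γ ∈ [γ₀, γ₀ + δ, γ₀ + 2 • δ, γ₀ + 3 • δ] := by
    decide
  obtain ⟨γ₀, -, δ, hδ, ⟨u, hu, v, hv, huv⟩, haγ₀, hsub, hline⟩ :=
    hlist a (mem_G2Roots_iff.mp ha) b (mem_G2Roots_iff.mp hb) c (mem_G2Roots_iff.mp hc)
      hab hac hbc habc
  refine ⟨γ₀, δ, mem_G2Short_iff.mpr hδ, ⟨u, by simpa using hu, v, by simpa using hv, huv⟩,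
    mem_rootString_iff.mpr haγ₀, fun p hp ↦ ?_, fun γ hγ h ↦ ?_⟩
  · exact mem_G2Roots_iff.mpr (hsub p (mem_rootString_iff.mp hp))
  · exact mem_rootString_iff.mpr (hline γ (mem_G2Roots_iff.mp hγ) h)

section LevelSet

variable {G : Type*} [CommGroup G] (ψ : AddChar (ℤ × ℤ) G)

def levelSet (q : G) : Set (ℤ × ℤ) := {γ ∈ G2Roots | ψ γ = q}

variable {q : G}

lemma finite_levelSet : (levelSet ψ q).Finite :=
  finite_G2Roots.subset (Set.sep_subset _ _)

lemma neg_notMem_levelSet (hq : ¬IsOfFinOrder q) {γ : ℤ × ℤ} (hγ : γ ∈ levelSet ψ q) :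
    -γ ∉ levelSet ψ q :=
  fun hneg ↦ ψ.map_neg_ne hq hγ.2 hneg.2

lemma exists_levelSet_eq_rootString (hq : ¬IsOfFinOrder q) (h : 2 < (levelSet ψ q).ncard) :
    ∃ γ₀, ∃ δ ∈ G2Short, levelSet ψ q = rootString γ₀ δ := by
  obtain ⟨a, ha, b, hb, c, hc, hab, hac, hbc⟩ := (Set.two_lt_ncard (finite_levelSet ψ)).mp h
  obtain ⟨γ₀, δ, hδ, ⟨u, hu, v, hv, rfl⟩, haγ₀, hsub, hline⟩ :=
    exists_rootString_of_collinear ha.1 hb.1 hc.1 hab hac hbc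
      (cross_sub_eq_zero ψ hq ha.2 hb.2 hc.2)
  have habc : {a, b, c} ⊆ levelSet ψ q := by
    simp only [Set.insert_subset_iff, Set.singleton_subset_iff]
    exact ⟨ha, hb, hc⟩
  have hδ1 : ψ (v - u) = 1 := ψ.map_sub_eq_one ((habc hu).2.trans (habc hv).2.symm)
  have hγ₀ : ψ γ₀ = q := (ψ.map_eq_of_mem_rootString hδ1 haγ₀).symm.trans ha.2
  refine ⟨γ₀, v - u, hδ, Set.Subset.antisymm (fun γ hγ ↦ ?_) (fun γ hγ ↦ ?_)⟩
  · exact hline γ hγ.1 (cross_sub_eq_zero ψ hq ha.2 hb.2 hγ.2)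
  · exact ⟨hsub hγ, (ψ.map_eq_of_mem_rootString hδ1 hγ).trans hγ₀⟩

end LevelSet

theorem stmt_12 (x y q : ℂˣ) (hq : ¬ IsOfFinOrder q)
    (S : Set (ℤ × ℤ))
    (hS : S = {γ ∈ G2Roots | x ^ γ.1 * y ^ γ.2 = q}) :
    (∀ γ ∈ S, -γ ∉ S) ∧
    S.ncard ∈ ({0, 1, 2, 4} : Set ℕ) ∧
    (S.ncard = 4 → ∃ γ₀ : ℤ × ℤ, ∃ δ ∈ G2Short,
      S = {γ₀, γ₀ + δ, γ₀ + 2 • δ, γ₀ + 3 • δ}) := by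
  obtain rfl : S = levelSet (pairChar x y) q := hS
  have hstring := exists_levelSet_eq_rootString (pairChar x y) hq
  refine ⟨fun γ hγ ↦ neg_notMem_levelSet _ hq hγ, ?_, fun h4 ↦ hstring (by omega)⟩
  rcases le_or_gt (levelSet (pairChar x y) q).ncard 2 with hle | hgt
  · simp only [Set.mem_insert_iff, Set.mem_singleton_iff]
    omega
  · obtain ⟨γ₀, δ, hδ, hS⟩ := hstring hgt
    rw [hS, ncard_rootString γ₀ (ne_zero_of_mem_G2Short hδ)]
    simp
end

section
/- Let γ, γ' ∈ R be linearly independent over ℚ. Then the index of the subgroup ℤγ + ℤγ' in ℤ² equals 3 if γ and γ' are both long, equals 2 if B(γ, γ') = 0 (i.e. γ ⊥ γ'), and equals 1 in all other cases. In particular the index is always at most 3, as asserted in the proof of Theorem 5.2 of the paper. -/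
/-- The symmetric bilinear form B((m,n),(m',n')) = 6mm' + 2nn' − 3(mn' + m'n). -/
def G2Form (p p' : ℤ × ℤ) : ℤ :=
  6 * p.1 * p'.1 + 2 * p.2 * p'.2 - 3 * (p.1 * p'.2 + p'.1 * p.2)

open Module

theorem AddSubgroup.index_closure_pair_eq_natAbs_det {u v : ℤ × ℤ}
    (h : LinearIndependent ℤ ![u, v]) :
    (AddSubgroup.closure {u, v}).index = (u.1 * v.2 - u.2 * v.1).natAbs := by
  rw [← Matrix.range_cons_cons_empty, ← Submodule.span_int_eq_addSubgroupClosure,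
    AddSubgroup.index_eq_natAbs_det (Basis.finTwoProd ℤ) _ (Basis.span h)]
  simp only [Basis.det_apply, Matrix.det_fin_two, Basis.toMatrix_apply]
  erw [Basis.span_apply h 0, Basis.span_apply h 1]
  simp [mul_comm]

theorem det_ne_zero_of_linearIndependent_pair {u v : ℤ × ℤ}
    (h : LinearIndependent ℤ ![u, v]) : u.1 * v.2 - u.2 * v.1 ≠ 0 := by
  rw [LinearIndependent.pair_iff] at h
  intro hdet
  obtain ⟨hv₂, hu₂⟩ := h v.2 (-u.2) (by ext <;> simp <;> linarith)
  obtain ⟨hv₁, hu₁⟩ := h v.1 (-u.1) (by ext <;> simp <;> linarith)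
  have hu : u = 0 := Prod.ext (neg_eq_zero.mp hu₁) (neg_eq_zero.mp hu₂)
  exact one_ne_zero (h 1 0 (by simp [hu])).1

theorem G2Roots.natAbs_det {γ γ' : ℤ × ℤ} (hγ : γ ∈ G2Roots) (hγ' : γ' ∈ G2Roots)
    (hdet : γ.1 * γ'.2 - γ.2 * γ'.1 ≠ 0) :
    (γ ∈ G2Long ∧ γ' ∈ G2Long → (γ.1 * γ'.2 - γ.2 * γ'.1).natAbs = 3) ∧
    (G2Form γ γ' = 0 → (γ.1 * γ'.2 - γ.2 * γ'.1).natAbs = 2) ∧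
    (¬(γ ∈ G2Long ∧ γ' ∈ G2Long) → G2Form γ γ' ≠ 0 → (γ.1 * γ'.2 - γ.2 * γ'.1).natAbs = 1) := by
  simp only [G2Roots, Set.mem_insert_iff, Set.mem_singleton_iff] at hγ hγ'
  revert hdet
  rcases hγ with rfl|rfl|rfl|rfl|rfl|rfl|rfl|rfl|rfl|rfl|rfl|rfl <;>
    rcases hγ' with rfl|rfl|rfl|rfl|rfl|rfl|rfl|rfl|rfl|rfl|rfl|rfl <;>
    simp only [G2Long, G2Form, Set.mem_insert_iff, Set.mem_singleton_iff] <;>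
    decide

theorem stmt_14 (γ γ' : ℤ × ℤ) (hγ : γ ∈ G2Roots) (hγ' : γ' ∈ G2Roots)
    (hindep : ∀ m n : ℤ, m • γ + n • γ' = 0 → m = 0 ∧ n = 0)
    (H : AddSubgroup (ℤ × ℤ)) (hH : H = AddSubgroup.closure {γ, γ'}) :
    (γ ∈ G2Long ∧ γ' ∈ G2Long → H.index = 3) ∧
    (G2Form γ γ' = 0 → H.index = 2) ∧
    (¬(γ ∈ G2Long ∧ γ' ∈ G2Long) → G2Form γ γ' ≠ 0 → H.index = 1) ∧
    H.index ≤ 3 := by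
  have hli : LinearIndependent ℤ ![γ, γ'] := LinearIndependent.pair_iff.mpr hindep
  rw [hH, AddSubgroup.index_closure_pair_eq_natAbs_det hli]
  obtain ⟨hlong, horth, hother⟩ :=
    G2Roots.natAbs_det hγ hγ' (det_ne_zero_of_linearIndependent_pair hli)
  refine ⟨hlong, horth, hother, ?_⟩
  by_cases hl : γ ∈ G2Long ∧ γ' ∈ G2Long
  · exact (hlong hl).le
  by_cases hB : G2Form γ γ' = 0
  · rw [horth hB]; norm_num
  · rw [hother hl hB]; norm_num
end
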